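/- Let P ∈ ℂ[x_1,...,x_n] be a polynomial, p a prime dividing n, ω = e^{2πi/p}, B_s = {x ∈ {1,ω,...,ω^{p-1}}^n : x_1⋯x_n = ω^s}. If P vanishes on B_s for some s and P(q) ≠ 0 for some q in B \ B_s, then deg(P) ≥ n(p-1)/p. -/

import Mathlib

/-!
On points whose coordinates are `p`-th roots of unity, `x ^ β` only depends on `β mod p`, so
there `P` is the function `y ↦ ∑ α, c α * ψ (α ⬝ᵥ y)` on `(ZMod p)ⁿ`, where `ψ` is the character
`a ↦ ω ^ a.val` and `c α` (`foldedCoeff`) collects the coefficients of the monomials with exponent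
`≡ α`; a nonzero `c α` forces `∑ (α i).val ≤ deg P`.

Vanishing on `B_s` gives `P (ψ ∘ y) * ∑ m, ψ (m * (∑ i, y i - s)) = 0` for every `y`. Expanding and
using the linear independence of characters yields `∑ m, ψ (-m s) * c (α - m) = 0` for every `α`,
so the nonzero coefficient `c α` provided by `P q ≠ 0` has a nonzero partner `c (α - m)`, `m ≠ 0`.
Both `α` and `α - m` then have digit sum at most `deg P`, but coordinatewise
`d a + (p - d) ((a + d) mod p) ≥ d (p - d) ≥ p - 1` for `d = m.val`, so the larger of the two digit
sums is at least `n (p - 1) / p`.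
-/

open Finset MvPolynomial

namespace AddChar

variable {σ R M : Type*} [Fintype σ]

lemma map_sum_eq_prod {ι A : Type*} [AddCommMonoid A] [CommMonoid M] (ψ : AddChar A M)
    (s : Finset ι) (f : ι → A) : ψ (∑ i ∈ s, f i) = ∏ i ∈ s, ψ (f i) :=
  map_prod ψ.toMonoidHom (fun i => Multiplicative.ofAdd (f i)) s

lemma apply_pow_eq_one {p : ℕ} [Monoid M] (ψ : AddChar (ZMod p) M) (a : ZMod p) :
    ψ a ^ p = 1 := by
  rw [← map_nsmul_eq_pow, nsmul_eq_mul, ZMod.natCast_self, zero_mul, map_zero_eq_one]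

variable [CommRing R]

def compDotProduct [CommMonoid M] (ψ : AddChar R M) (γ : σ → R) : AddChar (σ → R) M where
  toFun y := ψ (γ ⬝ᵥ y)
  map_zero_eq_one' := by simp
  map_add_eq_mul' y z := by rw [dotProduct_add, map_add_eq_mul]

lemma compDotProduct_injective [DecidableEq σ] [CommMonoid M] {ψ : AddChar R M}
    (hψ : ψ.IsPrimitive) : Function.Injective (ψ.compDotProduct (σ := σ)) := by
  intro γ δ h
  funext i
  by_contra hne
  refine hψ (sub_ne_zero.mpr hne) (ext _ _ fun x => ?_)
  have hx := DFunLike.congr_fun h (Pi.single i x)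
  simp only [compDotProduct, coe_mk, dotProduct_single] at hx
  rw [mulShift_apply, one_apply, sub_mul, sub_eq_add_neg, map_add_eq_mul, hx,
    ← map_add_eq_mul, add_neg_cancel, map_zero_eq_one]

lemma eq_zero_of_forall_sum_mul_dotProduct_eq_zero [DecidableEq σ] [Fintype R] {K : Type*}
    [CommRing K] [IsDomain K] {ψ : AddChar R K} (hψ : ψ.IsPrimitive) {c : (σ → R) → K}
    (h : ∀ y, ∑ γ, c γ * ψ (γ ⬝ᵥ y) = 0) (γ : σ → R) : c γ = 0 := by
  have hli := (linearIndependent_monoidHom (Multiplicative (σ → R)) K).comp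
    (fun γ => (ψ.compDotProduct γ).toMonoidHom)
    (toMonoidHomEquiv.injective.comp (compDotProduct_injective hψ))
  refine Fintype.linearIndependent_iff.mp hli c (funext fun y => ?_) γ
  simpa [compDotProduct] using h y.toAdd

end AddChar

namespace ZMod

variable {p : ℕ} [NeZero p]

lemma sub_one_le_val_mul_val_add_mul_val_add {k : ZMod p} (hk : k ≠ 0) (a : ZMod p) :
    p - 1 ≤ k.val * a.val + (p - k.val) * (a + k).val := by
  have ha := a.val_lt
  have hkp := k.val_lt
  have hk1 : 1 ≤ k.val := Nat.one_le_iff_ne_zero.mpr ((val_ne_zero k).mpr hk)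
  -- `(k.val - 1) * (p - 1 - k.val) ≥ 0`
  have hkey : p - 1 ≤ k.val * (p - k.val) := by
    zify [hkp.le, hk1.trans hkp.le]
    nlinarith
  rw [val_add]
  rcases lt_or_ge (a.val + k.val) p with h | h
  · rw [Nat.mod_eq_of_lt h]
    nlinarith
  · have hmod : (a.val + k.val) % p = a.val + k.val - p := by
      rw [Nat.mod_eq_sub_mod h, Nat.mod_eq_of_lt (by omega)]
    rw [hmod]
    nlinarith [Nat.mul_le_mul_left k.val (show p - k.val ≤ a.val by omega)]

lemma card_mul_sub_one_le_mul_of_sum_val_le {σ : Type*} [Fintype σ] (α : σ → ZMod p)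
    {k : ZMod p} (hk : k ≠ 0) {D : ℕ} (hα : ∑ i, (α i).val ≤ D)
    (hαk : ∑ i, (α i + k).val ≤ D) :
    Fintype.card σ * (p - 1) ≤ p * D :=
  calc Fintype.card σ * (p - 1) = ∑ _i : σ, (p - 1) := by simp
    _ ≤ ∑ i, (k.val * (α i).val + (p - k.val) * (α i + k).val) :=
        sum_le_sum fun i _ => sub_one_le_val_mul_val_add_mul_val_add hk (α i)
    _ = k.val * ∑ i, (α i).val + (p - k.val) * ∑ i, (α i + k).val := by
        rw [sum_add_distrib, mul_sum, mul_sum]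
    _ ≤ k.val * D + (p - k.val) * D := by gcongr
    _ = p * D := by rw [← add_mul, Nat.add_sub_cancel' k.val_lt.le]

end ZMod

namespace MvPolynomial

section Folding

variable {σ R : Type*} [Fintype σ] [CommSemiring R]

noncomputable def foldedCoeff (p : ℕ) (P : MvPolynomial σ R) (α : σ → ZMod p) : R :=
  ∑ β ∈ P.support with (fun i => (β i : ZMod p)) = α, coeff β P

variable {p : ℕ}

lemma sum_val_le_totalDegree_of_foldedCoeff_ne_zero {P : MvPolynomial σ R} {α : σ → ZMod p}
    (h : foldedCoeff p P α ≠ 0) : ∑ i, (α i).val ≤ P.totalDegree := by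
  obtain ⟨β, hβ, -⟩ := exists_ne_zero_of_sum_ne_zero h
  obtain ⟨hβP, rfl⟩ := mem_filter.mp hβ
  calc ∑ i, ((β i : ℕ) : ZMod p).val ≤ ∑ i, β i :=
        sum_le_sum fun i _ => (ZMod.val_natCast p _).trans_le (Nat.mod_le _ _)
    _ ≤ P.totalDegree := by
        simpa [Finsupp.sum_fintype] using le_totalDegree hβP

variable [DecidableEq σ] [NeZero p]

lemma eval_eq_sum_foldedCoeff (P : MvPolynomial σ R) {x : σ → R} (hx : ∀ i, x i ^ p = 1) :
    eval x P = ∑ α, foldedCoeff p P α * ∏ i, x i ^ (α i).val := by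
  rw [eval_eq', ← sum_fiberwise P.support (fun β i => (β i : ZMod p))]
  refine sum_congr rfl fun α _ => ?_
  rw [foldedCoeff, sum_mul]
  refine sum_congr rfl fun β hβ => ?_
  rw [← (mem_filter.mp hβ).2]
  congr 1
  refine prod_congr rfl fun i _ => ?_
  rw [ZMod.val_natCast, ← pow_eq_pow_mod _ (hx i)]

lemma eval_addChar_eq_sum_foldedCoeff (P : MvPolynomial σ R) (ψ : AddChar (ZMod p) R)
    (y : σ → ZMod p) :
    eval (fun i => ψ (y i)) P = ∑ α, foldedCoeff p P α * ψ (α ⬝ᵥ y) := by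
  rw [eval_eq_sum_foldedCoeff P fun i => ψ.apply_pow_eq_one (y i)]
  refine sum_congr rfl fun α _ => ?_
  rw [dotProduct, AddChar.map_sum_eq_prod]
  congr 1
  refine prod_congr rfl fun i _ => ?_
  rw [← AddChar.map_nsmul_eq_pow, nsmul_eq_mul, ZMod.natCast_zmod_val]

end Folding

variable {σ K : Type*} [Fintype σ] [DecidableEq σ] [CommRing K] [IsDomain K] {p : ℕ} [NeZero p]
  {P : MvPolynomial σ K} {ψ : AddChar (ZMod p) K} {s : ZMod p}

lemma sum_addChar_mul_foldedCoeff_sub_eq_zero (hψ : ψ.IsPrimitive)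
    (hP : ∀ y : σ → ZMod p, ∑ i, y i = s → eval (fun i => ψ (y i)) P = 0) (γ : σ → ZMod p) :
    ∑ m, ψ (-(m * s)) * foldedCoeff p P (γ - fun _ => m) = 0 := by
  refine ψ.eq_zero_of_forall_sum_mul_dotProduct_eq_zero hψ
    (c := fun γ => ∑ m, ψ (-(m * s)) * foldedCoeff p P (γ - fun _ => m)) (fun y => ?_) γ
  have hvanish : (∑ m, ψ (m * (∑ i, y i - s))) * eval (fun i => ψ (y i)) P = 0 := by
    by_cases hy : ∑ i, y i = s
    · rw [hP y hy, mul_zero]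
    · rw [AddChar.sum_mulShift _ hψ, if_neg (sub_ne_zero.mpr hy), Nat.cast_zero, zero_mul]
  have hshift (m : ZMod p) (α : σ → ZMod p) :
      ψ (-(m * s)) * ψ ((α + fun _ => m) ⬝ᵥ y) = ψ (m * (∑ i, y i - s)) * ψ (α ⬝ᵥ y) := by
    rw [← AddChar.map_add_eq_mul, ← AddChar.map_add_eq_mul, add_dotProduct]
    congr 1
    simp only [dotProduct, mul_sub, mul_sum]
    ring
  rw [← hvanish, eval_addChar_eq_sum_foldedCoeff]
  simp_rw [sum_mul, mul_sum]
  rw [sum_comm]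
  refine sum_congr rfl fun m _ => ?_
  rw [← Equiv.sum_comp (Equiv.addRight fun _ => m)]
  refine sum_congr rfl fun α _ => ?_
  rw [Equiv.coe_addRight, add_sub_cancel_right]
  linear_combination foldedCoeff p P α * hshift m α

lemma exists_foldedCoeff_sub_ne_zero (hψ : ψ.IsPrimitive)
    (hP : ∀ y : σ → ZMod p, ∑ i, y i = s → eval (fun i => ψ (y i)) P = 0) {α : σ → ZMod p}
    (hα : foldedCoeff p P α ≠ 0) : ∃ m ≠ 0, foldedCoeff p P (α - fun _ => m) ≠ 0 := by
  by_contra! h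
  have hsum := sum_addChar_mul_foldedCoeff_sub_eq_zero hψ hP α
  rw [sum_eq_single 0 (fun m _ hm => by rw [h m hm, mul_zero]) (by simp)] at hsum
  exact hα (by simpa [← Pi.zero_def] using hsum)

theorem card_mul_sub_one_le_mul_totalDegree (hψ : ψ.IsPrimitive)
    (hP : ∀ y : σ → ZMod p, ∑ i, y i = s → eval (fun i => ψ (y i)) P = 0) {x : σ → K}
    (hx : ∀ i, x i ^ p = 1) (hPx : eval x P ≠ 0) :
    Fintype.card σ * (p - 1) ≤ p * P.totalDegree := by
  obtain ⟨α, hα⟩ : ∃ α, foldedCoeff p P α ≠ 0 := by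
    by_contra! h
    exact hPx (by simp [eval_eq_sum_foldedCoeff P hx, h])
  obtain ⟨m, hm, hαm⟩ := exists_foldedCoeff_sub_ne_zero hψ hP hα
  refine ZMod.card_mul_sub_one_le_mul_of_sum_val_le (α - fun _ => m) hm
    (sum_val_le_totalDegree_of_foldedCoeff_ne_zero hαm) ?_
  simpa using sum_val_le_totalDegree_of_foldedCoeff_ne_zero hα

end MvPolynomial

theorem stmt16_general (p n s : ℕ) (hp : p.Prime)
    (P : MvPolynomial (Fin n) ℂ)
    (hvanish : ∀ x : Fin n → ℂ, (∀ i, x i ^ p = 1) →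
      ∏ i, x i = Complex.exp (2 * Real.pi * Complex.I / p) ^ s → eval x P = 0)
    (q : Fin n → ℂ) (hq : ∀ i, q i ^ p = 1)
    (hPq : eval q P ≠ 0) :
    n * (p - 1) ≤ p * P.totalDegree := by
  have : NeZero p := ⟨hp.ne_zero⟩
  have hω : IsPrimitiveRoot (Complex.exp (2 * Real.pi * Complex.I / p)) p :=
    Complex.isPrimitiveRoot_exp p hp.ne_zero
  set ψ := AddChar.zmodChar p hω.pow_eq_one
  have hP (y : Fin n → ZMod p) (hy : ∑ i, y i = s) : eval (fun i => ψ (y i)) P = 0 :=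
    hvanish _ (fun i => ψ.apply_pow_eq_one (y i)) <| by
      rw [← AddChar.map_sum_eq_prod, hy, AddChar.zmodChar_apply']
  simpa using MvPolynomial.card_mul_sub_one_le_mul_totalDegree
    (AddChar.zmodChar_primitive_of_primitive_root p hω) hP hq hPq

/-- If a polynomial `P` vanishes on `B_s` (the vectors of `p`-th roots of unity whose
coordinates multiply to `ω^s`) but is nonzero at some point `q ∈ B \ B_s`, then
`deg P ≥ n(p-1)/p`. -/
theorem stmt16 (p n s : ℕ) (hp : p.Prime) (hpn : p ∣ n) (hn : 0 < n) (hs : s ≤ p - 1)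
    (P : MvPolynomial (Fin n) ℂ)
    (hvanish : ∀ x : Fin n → ℂ, (∀ i, x i ^ p = 1) →
      ∏ i, x i = Complex.exp (2 * Real.pi * Complex.I / p) ^ s → eval x P = 0)
    (q : Fin n → ℂ) (hq : ∀ i, q i ^ p = 1)
    (hq' : ∏ i, q i ≠ Complex.exp (2 * Real.pi * Complex.I / p) ^ s)
    (hPq : eval q P ≠ 0) :
    n * (p - 1) ≤ p * P.totalDegree :=
  stmt16_general p n s hp P hvanish q hq hPq
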